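/- For every K > 0 there exists C > 0 such that the following holds: let ε ∈ (0, 1/2) and let w : ℝ² → ℝ be measurable with 0 ≤ w(x) ≤ K/ε² for almost every x and ∫_{ℝ²} w(x) dx ≤ 1. Then for every x ∈ ℝ², Gw(x) := ∫_{ℝ²} log(1/|x−y|) 1_{|x−y|≤1} w(y) dy ≤ log(1/ε) + C. -/

import Mathlib

open MeasureTheory Real intervalIntegral

/-- Euclidean norm on `ℝ²`. -/
noncomputable def vnorm (x : ℝ × ℝ) : ℝ := Real.sqrt (x.1 ^ 2 + x.2 ^ 2)

/-- Rotation `R_a` on `ℝ²`. -/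
noncomputable def vrot (a : ℝ) (x : ℝ × ℝ) : ℝ × ℝ :=
  (x.1 * Real.cos a + x.2 * Real.sin a, -x.1 * Real.sin a + x.2 * Real.cos a)

/-- Japanese bracket `⟨x⟩ = √(1+|x|²)` on `ℝ²`. -/
noncomputable def jap (x : ℝ × ℝ) : ℝ := Real.sqrt (1 + x.1 ^ 2 + x.2 ^ 2)

/-- The truncated logarithmic potential
`Gw(x) = ∫ log(1/|x−y|) 1_{|x−y|≤1} w(y) dy`. -/
noncomputable def Gfun (w : ℝ × ℝ → ℝ) (x : ℝ × ℝ) : ℝ :=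
  ∫ y : ℝ × ℝ, (if vnorm (x - y) ≤ 1 then Real.log (1 / vnorm (x - y)) else 0) * w y

/-!
Split the kernel as `log (1/|z|) ≤ log (1/ε) + log⁺ (ε/|z|)`. Against `w`, the first term
contributes at most `log (1/ε)` because `w` has mass at most `1`. The second term lives on the
disc of radius `ε`, and in polar coordinates `r log⁺ (ε/r) ≤ ε`, so its integral is at most
`2πε²`; against `w ≤ K/ε²` it contributes at most the constant `2πK`.
-/

open Set

lemma vnorm_nonneg (z : ℝ × ℝ) : 0 ≤ vnorm z := Real.sqrt_nonneg _

lemma continuous_vnorm : Continuous vnorm := by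
  unfold vnorm; fun_prop

lemma vnorm_polarCoord_symm (p : ℝ × ℝ) : vnorm (polarCoord.symm p) = |p.1| := by
  rw [polarCoord_symm_apply, vnorm, mul_pow, mul_pow, ← mul_add, cos_sq_add_sin_sq, mul_one,
    sqrt_sq_eq_abs]

lemma ite_log_one_div_nonneg {t : ℝ} (ht : 0 ≤ t) : 0 ≤ if t ≤ 1 then log (1 / t) else 0 := by
  split_ifs with h
  · rw [one_div, log_inv, neg_nonneg]
    exact log_nonpos ht h
  · exact le_rfl

lemma ite_log_one_div_le {ε : ℝ} (hε0 : 0 < ε) (hε1 : ε ≤ 1) (t : ℝ) :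
    (if t ≤ 1 then log (1 / t) else 0) ≤ log (1 / ε) + log⁺ (ε / t) := by
  have hsplit : 1 / t = 1 / ε * (ε / t) := by field_simp
  calc (if t ≤ 1 then log (1 / t) else 0)
      ≤ log⁺ (1 / t) := by split_ifs <;> simp [posLog_apply]
    _ ≤ log⁺ (1 / ε) + log⁺ (ε / t) := hsplit ▸ posLog_mul
    _ = log (1 / ε) + log⁺ (ε / t) := by
      rw [posLog_eq_log (by rw [abs_of_pos (by positivity)]; exact one_le_one_div hε0 hε1)]

lemma mul_posLog_div_le {r ε : ℝ} (hr : 0 ≤ r) (hε : 0 ≤ ε) : r * log⁺ (ε / r) ≤ ε := by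
  rcases hr.eq_or_lt with rfl | hr
  · simpa using hε
  rw [posLog_apply, mul_max_of_nonneg _ _ hr.le, mul_zero, max_le_iff]
  refine ⟨hε, ?_⟩
  calc r * log (ε / r) ≤ r * (ε / r) := by gcongr; exact log_le_self (by positivity)
    _ = ε := by field_simp

lemma measurable_posLog_div_vnorm (ε : ℝ) : Measurable fun z => log⁺ (ε / vnorm z) :=
  continuous_posLog.measurable.comp (measurable_const.div continuous_vnorm.measurable)

lemma lintegral_posLog_div_vnorm_le {ε : ℝ} (hε : 0 ≤ ε) :
    ∫⁻ z, ENNReal.ofReal (log⁺ (ε / vnorm z)) ≤ ENNReal.ofReal (2 * π * ε ^ 2) := by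
  set S : Set (ℝ × ℝ) := Ioc 0 ε ×ˢ Ioo (-π) π
  have hS : MeasurableSet S := measurableSet_Ioc.prod measurableSet_Ioo
  have hbound : ∀ p ∈ polarCoord.target,
      ENNReal.ofReal p.1 • ENNReal.ofReal (log⁺ (ε / vnorm (polarCoord.symm p)))
        ≤ S.indicator (fun _ => ENNReal.ofReal ε) p := by
    rintro p ⟨hp1, hp2⟩
    rw [vnorm_polarCoord_symm, abs_of_pos hp1, smul_eq_mul, ← ENNReal.ofReal_mul hp1.le]
    by_cases hpε : p.1 ≤ ε
    · rw [indicator_of_mem (show p ∈ S from ⟨⟨hp1, hpε⟩, hp2⟩)]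
      exact ENNReal.ofReal_le_ofReal (mul_posLog_div_le hp1.le hε)
    · have hzero : log⁺ (ε / p.1) = 0 := by
        rw [posLog_eq_zero_iff, abs_of_nonneg (div_nonneg hε hp1.le), div_le_one hp1]
        exact (not_le.1 hpε).le
      simp [hzero]
  calc ∫⁻ z, ENNReal.ofReal (log⁺ (ε / vnorm z))
      = ∫⁻ p in polarCoord.target,
          ENNReal.ofReal p.1 • ENNReal.ofReal (log⁺ (ε / vnorm (polarCoord.symm p))) :=
        (lintegral_comp_polarCoord_symm _).symm
    _ ≤ ∫⁻ p in polarCoord.target, S.indicator (fun _ => ENNReal.ofReal ε) p :=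
        setLIntegral_mono (measurable_const.indicator hS) hbound
    _ ≤ ∫⁻ p, S.indicator (fun _ => ENNReal.ofReal ε) p := setLIntegral_le_lintegral _ _
    _ = ENNReal.ofReal (2 * π * ε ^ 2) := by
      rw [lintegral_indicator_const hS, Measure.volume_eq_prod, Measure.prod_prod,
        Real.volume_Ioc, Real.volume_Ioo, ← ENNReal.ofReal_mul (by linarith),
        ← ENNReal.ofReal_mul hε]
      congr 1
      ring

lemma integrable_posLog_div_vnorm {ε : ℝ} (hε : 0 ≤ ε) :
    Integrable fun z => log⁺ (ε / vnorm z) := by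
  refine ⟨(measurable_posLog_div_vnorm ε).aestronglyMeasurable, ?_⟩
  rw [hasFiniteIntegral_iff_ofReal (.of_forall fun _ => posLog_nonneg)]
  exact (lintegral_posLog_div_vnorm_le hε).trans_lt ENNReal.ofReal_lt_top

lemma integral_posLog_div_vnorm_le {ε : ℝ} (hε : 0 ≤ ε) :
    ∫ z, log⁺ (ε / vnorm z) ≤ 2 * π * ε ^ 2 := by
  rw [integral_eq_lintegral_of_nonneg_ae (.of_forall fun _ => posLog_nonneg)
    (measurable_posLog_div_vnorm ε).aestronglyMeasurable]
  exact ENNReal.toReal_le_of_le_ofReal (by positivity) (lintegral_posLog_div_vnorm_le hε)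

/-- for vorticities of mass at most `1` bounded by `K/ε²`, the
truncated logarithmic potential satisfies `Gw(x) ≤ log(1/ε) + C` everywhere. -/
theorem stmt_13 : ∀ K > (0:ℝ), ∃ C > (0:ℝ), ∀ ε : ℝ, ε ∈ Set.Ioo (0:ℝ) (1/2) →
    ∀ w : ℝ × ℝ → ℝ, Measurable w →
    (∀ᵐ x : ℝ × ℝ, 0 ≤ w x ∧ w x ≤ K / ε ^ 2) →
    Integrable w → (∫ x : ℝ × ℝ, w x) ≤ 1 →
    ∀ x : ℝ × ℝ, Gfun w x ≤ Real.log (1 / ε) + C := by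
  intro K hK
  refine ⟨2 * π * K, by positivity, ?_⟩
  rintro ε ⟨hε0, hε2⟩ w - hwb hwi hw1 x
  have hε1 : ε ≤ 1 := by linarith
  have hlog : 0 ≤ log (1 / ε) := log_nonneg (one_le_one_div hε0 hε1)
  have hg : Integrable fun y => log⁺ (ε / vnorm (x - y)) :=
    (integrable_posLog_div_vnorm hε0.le).comp_sub_left x
  calc Gfun w x
      ≤ ∫ y, (log (1 / ε) * w y + K / ε ^ 2 * log⁺ (ε / vnorm (x - y))) := by
        refine integral_mono_of_nonneg ?_ ((hwi.const_mul _).add (hg.const_mul _)) ?_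
        · filter_upwards [hwb] with y hy
          exact mul_nonneg (ite_log_one_div_nonneg (vnorm_nonneg _)) hy.1
        · filter_upwards [hwb] with y ⟨hw0, hwK⟩
          have := ite_log_one_div_le hε0 hε1 (vnorm (x - y))
          nlinarith [posLog_nonneg (x := ε / vnorm (x - y))]
    _ = log (1 / ε) * (∫ y, w y) + K / ε ^ 2 * ∫ z, log⁺ (ε / vnorm z) := by
        rw [integral_add (hwi.const_mul _) (hg.const_mul _), MeasureTheory.integral_const_mul,
          MeasureTheory.integral_const_mul,
          integral_sub_left_eq_self (fun z => log⁺ (ε / vnorm z))]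
    _ ≤ log (1 / ε) * 1 + K / ε ^ 2 * (2 * π * ε ^ 2) := by
        gcongr
        exact integral_posLog_div_vnorm_le hε0.le
    _ = log (1 / ε) + 2 * π * K := by field_simp
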